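/- Any two tropical lines with distinct vertices whose vertex difference does not lie in the directions (1,0), (0,1), or (1,1) intersect in exactly one point, where a tropical line with vertex (a,b) is the set {(a,y) : y ≤ b} ∪ {(x,b) : x ≤ a} ∪ {(a+s, b+s) : s ≥ 0}. -/
import Mathlib


/-- The tropical line with vertex `v ∈ ℝ²`: three rays from `v` in directions
`(-1,0)`, `(0,-1)` and `(1,1)`. -/
def TropLine (v : ℝ × ℝ) : Set (ℝ × ℝ) :=
  {p | (p.2 = v.2 ∧ p.1 ≤ v.1) ∨ (p.1 = v.1 ∧ p.2 ≤ v.2) ∨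
    ∃ s : ℝ, s ≥ 0 ∧ p = (v.1 + s, v.2 + s)}

lemma memTrop (v p : ℝ × ℝ) : p ∈ TropLine v ↔
    (p.2 = v.2 ∧ p.1 ≤ v.1) ∨ (p.1 = v.1 ∧ p.2 ≤ v.2) ∨
    (v.1 ≤ p.1 ∧ p.1 - v.1 = p.2 - v.2) := by
  simp only [TropLine, Set.mem_setOf_eq]
  constructor
  · rintro (h|h|⟨s,hs,rfl⟩)
    · exact Or.inl h
    · exact Or.inr (Or.inl h)
    · exact Or.inr (Or.inr ⟨by simp; linarith, by simp⟩)
  · rintro (h|h|⟨h1,h2⟩)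
    · exact Or.inl h
    · exact Or.inr (Or.inl h)
    · refine Or.inr (Or.inr ⟨p.1 - v.1, by linarith, ?_⟩)
      rw [Prod.ext_iff]
      constructor <;> simp <;> linarith

lemma key (a₁ b₁ a₂ b₂ : ℝ) (hα : a₁ ≠ a₂) (hβ : b₁ ≠ b₂)
    (hγ : a₁ - b₁ ≠ a₂ - b₂) :
    ∃! p : ℝ × ℝ, p ∈ TropLine (a₁, b₁) ∧ p ∈ TropLine (a₂, b₂) := by
  rcases lt_or_gt_of_ne hα with hA | hA <;> rcases lt_or_gt_of_ne hβ with hB | hB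
  · -- a₁ < a₂, b₁ < b₂
    rcases lt_or_gt_of_ne hγ with hC | hC
    · -- a₁ - b₁ < a₂ - b₂ : p = (a₁ + (b₂ - b₁), b₂) on D1 ∩ H2
      refine ⟨(a₁ + (b₂ - b₁), b₂), ⟨?_, ?_⟩, ?_⟩
      · rw [memTrop]
        exact Or.inr (Or.inr ⟨by simp; linarith, by simp⟩)
      · rw [memTrop]
        exact Or.inl ⟨by simp, by simp; linarith⟩
      · rintro q ⟨hq1, hq2⟩
        rw [memTrop] at hq1 hq2
        obtain ⟨e1,e2⟩|⟨e1,e2⟩|⟨e1,e2⟩ := hq1 <;>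
          obtain ⟨f1,f2⟩|⟨f1,f2⟩|⟨f1,f2⟩ := hq2 <;>
          (rw [Prod.ext_iff]; constructor <;> simp_all <;> linarith)
    · -- a₁ - b₁ > a₂ - b₂ : p = (a₂, b₁ + (a₂ - a₁)) on D1 ∩ V2
      refine ⟨(a₂, b₁ + (a₂ - a₁)), ⟨?_, ?_⟩, ?_⟩
      · rw [memTrop]
        exact Or.inr (Or.inr ⟨by simp; linarith, by simp⟩)
      · rw [memTrop]
        exact Or.inr (Or.inl ⟨by simp, by simp; linarith⟩)
      · rintro q ⟨hq1, hq2⟩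
        rw [memTrop] at hq1 hq2
        obtain ⟨e1,e2⟩|⟨e1,e2⟩|⟨e1,e2⟩ := hq1 <;>
          obtain ⟨f1,f2⟩|⟨f1,f2⟩|⟨f1,f2⟩ := hq2 <;>
          (rw [Prod.ext_iff]; constructor <;> simp_all <;> linarith)
  · -- a₁ < a₂, b₁ > b₂ : p = (a₁, b₂) on V1 ∩ H2
    refine ⟨(a₁, b₂), ⟨?_, ?_⟩, ?_⟩
    · rw [memTrop]
      exact Or.inr (Or.inl ⟨by simp, by simp; linarith⟩)
    · rw [memTrop]
      exact Or.inl ⟨by simp, by simp; linarith⟩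
    · rintro q ⟨hq1, hq2⟩
      rw [memTrop] at hq1 hq2
      obtain ⟨e1,e2⟩|⟨e1,e2⟩|⟨e1,e2⟩ := hq1 <;>
        obtain ⟨f1,f2⟩|⟨f1,f2⟩|⟨f1,f2⟩ := hq2 <;>
        (rw [Prod.ext_iff]; constructor <;> simp_all <;> linarith)
  · -- a₁ > a₂, b₁ < b₂ : p = (a₂, b₁) on H1 ∩ V2
    refine ⟨(a₂, b₁), ⟨?_, ?_⟩, ?_⟩
    · rw [memTrop]
      exact Or.inl ⟨by simp, by simp; linarith⟩
    · rw [memTrop]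
      exact Or.inr (Or.inl ⟨by simp, by simp; linarith⟩)
    · rintro q ⟨hq1, hq2⟩
      rw [memTrop] at hq1 hq2
      obtain ⟨e1,e2⟩|⟨e1,e2⟩|⟨e1,e2⟩ := hq1 <;>
        obtain ⟨f1,f2⟩|⟨f1,f2⟩|⟨f1,f2⟩ := hq2 <;>
        (rw [Prod.ext_iff]; constructor <;> simp_all <;> linarith)
  · -- a₁ > a₂, b₁ > b₂
    rcases lt_or_gt_of_ne hγ with hC | hC
    · -- a₁ - b₁ < a₂ - b₂ : p = (a₁, b₂ + (a₁ - a₂)) on V1 ∩ D2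
      refine ⟨(a₁, b₂ + (a₁ - a₂)), ⟨?_, ?_⟩, ?_⟩
      · rw [memTrop]
        exact Or.inr (Or.inl ⟨by simp, by simp; linarith⟩)
      · rw [memTrop]
        exact Or.inr (Or.inr ⟨by simp; linarith, by simp⟩)
      · rintro q ⟨hq1, hq2⟩
        rw [memTrop] at hq1 hq2
        obtain ⟨e1,e2⟩|⟨e1,e2⟩|⟨e1,e2⟩ := hq1 <;>
          obtain ⟨f1,f2⟩|⟨f1,f2⟩|⟨f1,f2⟩ := hq2 <;>
          (rw [Prod.ext_iff]; constructor <;> simp_all <;> linarith)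
    · -- a₁ - b₁ > a₂ - b₂ : p = (a₂ + (b₁ - b₂), b₁) on H1 ∩ D2
      refine ⟨(a₂ + (b₁ - b₂), b₁), ⟨?_, ?_⟩, ?_⟩
      · rw [memTrop]
        exact Or.inl ⟨by simp, by simp; linarith⟩
      · rw [memTrop]
        exact Or.inr (Or.inr ⟨by simp; linarith, by simp⟩)
      · rintro q ⟨hq1, hq2⟩
        rw [memTrop] at hq1 hq2
        obtain ⟨e1,e2⟩|⟨e1,e2⟩|⟨e1,e2⟩ := hq1 <;>
          obtain ⟨f1,f2⟩|⟨f1,f2⟩|⟨f1,f2⟩ := hq2 <;>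
          (rw [Prod.ext_iff]; constructor <;> simp_all <;> linarith)

/-- Two tropical lines whose vertex difference is not a multiple of `(1,0)`,
`(0,1)` or `(1,1)` intersect in exactly one point. -/
theorem tropical_lines_intersect_uniquely (v₁ v₂ : ℝ × ℝ)
    (h10 : ∀ c : ℝ, v₁ - v₂ ≠ (c, 0))
    (h01 : ∀ c : ℝ, v₁ - v₂ ≠ (0, c))
    (h11 : ∀ c : ℝ, v₁ - v₂ ≠ (c, c)) :
    ∃! p : ℝ × ℝ, p ∈ TropLine v₁ ∧ p ∈ TropLine v₂ := by
  have hα : v₁.1 ≠ v₂.1 := by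
    intro h
    exact h01 (v₁.2 - v₂.2) (by rw [Prod.ext_iff]; simp [h])
  have hβ : v₁.2 ≠ v₂.2 := by
    intro h
    exact h10 (v₁.1 - v₂.1) (by rw [Prod.ext_iff]; simp [h])
  have hγ : v₁.1 - v₁.2 ≠ v₂.1 - v₂.2 := by
    intro h
    refine h11 (v₁.1 - v₂.1) ?_
    rw [Prod.ext_iff]
    constructor <;> simp <;> linarith
  have := key v₁.1 v₁.2 v₂.1 v₂.2 hα hβ hγ
  simpa using this
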